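/- The rotationally invariant function Φ₂ = φ_even = 1 - sin x log((1+sin x)/cos x) on S² \ {p_N, p_S}, where x is latitude, equals G_{p_N} + (1 - log 2) φ_odd, satisfies (Δ+2)Φ₂ = 0 away from the poles, and near each pole has the expansion Φ₂ = log(distance to pole) + O(1); hence Φ₂ is the unique (up to the stated normalization) rotationally invariant linearized doubling solution with unit logarithmic singularities exactly at the two poles. -/
import Mathlib

open Real Set

/-- The Green's function profile G(r) = 1 + cos r · (-1 + log(2 sin r/(1 + cos r))). -/
noncomputable def Gfun (r : ℝ) : ℝ := 1 + cos r * (-1 + log (2 * sin r / (1 + cos r)))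

/-- φ_even(x) = 1 - sin x · log((1+sin x)/cos x). -/
noncomputable def phiEven (x : ℝ) : ℝ := 1 - sin x * log ((1 + sin x) / cos x)

noncomputable def phiEven' (x : ℝ) : ℝ := -(cos x * log ((1 + sin x) / cos x)) - tan x

lemma sin_gt_neg_one' {x : ℝ} (hx : x ∈ Ioo (-(π/2)) (π/2)) : -1 < sin x := by
  have := Real.sin_lt_sin_of_lt_of_le_pi_div_two (x := -(π/2)) (y := x) le_rfl hx.2.le hx.1
  simpa using this

lemma logterm_hasDeriv {x : ℝ} (hx : x ∈ Ioo (-(π/2)) (π/2)) :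
    HasDerivAt (fun y => log ((1 + sin y) / cos y)) (1 / cos x) x := by
  have hc : 0 < cos x := Real.cos_pos_of_mem_Ioo hx
  have hs : 0 < 1 + sin x := by linarith [sin_gt_neg_one' hx]
  have hq : HasDerivAt (fun y => (1 + sin y) / cos y)
      (((0 + cos x) * cos x - (1 + sin x) * (-sin x)) / (cos x)^2) x :=
    ((hasDerivAt_const x 1).add (Real.hasDerivAt_sin x)).div (Real.hasDerivAt_cos x) hc.ne'
  have hL := hq.log (by positivity : ((1 + sin x) / cos x) ≠ 0)
  convert hL using 1
  have h1 : (0 + cos x) * cos x - (1 + sin x) * (-sin x) = 1 + sin x := by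
    have := Real.sin_sq_add_cos_sq x; nlinarith
  rw [h1]
  field_simp

lemma phiEven_hasDeriv {x : ℝ} (hx : x ∈ Ioo (-(π/2)) (π/2)) :
    HasDerivAt phiEven (phiEven' x) x := by
  have hc : 0 < cos x := Real.cos_pos_of_mem_Ioo hx
  have h : HasDerivAt phiEven
      (0 - (cos x * log ((1 + sin x) / cos x) + sin x * (1 / cos x))) x :=
    (hasDerivAt_const x 1).sub ((Real.hasDerivAt_sin x).mul (logterm_hasDeriv hx))
  convert h using 1
  rw [phiEven', Real.tan_eq_sin_div_cos]
  field_simp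
  ring

lemma phiEven'_hasDeriv {x : ℝ} (hx : x ∈ Ioo (-(π/2)) (π/2)) :
    HasDerivAt phiEven' (sin x * log ((1 + sin x) / cos x) - 1 - 1 / (cos x)^2) x := by
  have hc : 0 < cos x := Real.cos_pos_of_mem_Ioo hx
  have h : HasDerivAt phiEven'
      (-((-sin x) * log ((1 + sin x) / cos x) + cos x * (1 / cos x)) - 1 / cos x ^ 2) x :=
    (((Real.hasDerivAt_cos x).mul (logterm_hasDeriv hx)).neg).sub (Real.hasDerivAt_tan hc.ne')
  convert h using 1
  field_simp
  ring

/-- Φ₂ = φ_even equals G_{p_N} + (1 - log 2) φ_odd (with d_{p_N} = π/2 - x),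
satisfies the rotationally invariant linearized equation
φ'' - tan x φ' + 2φ = 0 away from the poles, and near the north pole has the
expansion Φ₂ = log(distance to pole) + O(1). -/
theorem Phi2_polar_LD_solution :
    (∀ x ∈ Ioo (-(π/2)) (π/2),
      phiEven x = Gfun (π/2 - x) + (1 - log 2) * sin x) ∧
    (∀ x ∈ Ioo (-(π/2)) (π/2),
      deriv (deriv phiEven) x - tan x * deriv phiEven x + 2 * phiEven x = 0) ∧
    (∃ C > 0, ∀ x ∈ Ioo 0 (π/2), |phiEven x - log (π/2 - x)| ≤ C) := by
  refine ⟨?_, ?_, ?_⟩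
  · intro x hx
    have hc : 0 < cos x := Real.cos_pos_of_mem_Ioo hx
    have hs : 0 < 1 + sin x := by linarith [sin_gt_neg_one' hx]
    have e1 : log ((1 + sin x) / cos x) = log (1 + sin x) - log (cos x) :=
      Real.log_div hs.ne' hc.ne'
    have e2 : log (2 * cos x / (1 + sin x)) = log 2 + log (cos x) - log (1 + sin x) := by
      rw [Real.log_div (by positivity) hs.ne', Real.log_mul two_ne_zero hc.ne']
    rw [phiEven, Gfun, Real.sin_pi_div_two_sub, Real.cos_pi_div_two_sub, e1, e2]
    ring
  · intro x hx
    have hc : 0 < cos x := Real.cos_pos_of_mem_Ioo hx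
    have hev : deriv phiEven =ᶠ[nhds x] phiEven' := by
      filter_upwards [Ioo_mem_nhds hx.1 hx.2] with y hy
      exact (phiEven_hasDeriv hy).deriv
    have h2 : deriv (deriv phiEven) x = deriv phiEven' x := hev.deriv_eq
    rw [h2, (phiEven'_hasDeriv hx).deriv, (phiEven_hasDeriv hx).deriv, phiEven', phiEven,
      Real.tan_eq_sin_div_cos]
    have hpyth := Real.sin_sq_add_cos_sq x
    field_simp
    nlinarith [hpyth]
  · refine ⟨5, by norm_num, ?_⟩
    intro x hx
    obtain ⟨t, ht⟩ : ∃ t, t = π/2 - x := ⟨_, rfl⟩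
    rw [← ht]
    have ht0 : 0 < t := by rw [ht]; linarith [hx.2]
    have htp : t < π/2 := by rw [ht]; linarith [hx.1]
    have hxmem : x ∈ Ioo (-(π/2)) (π/2) := ⟨by linarith [hx.1, Real.pi_pos], hx.2⟩
    have hc : 0 < cos x := Real.cos_pos_of_mem_Ioo hxmem
    have hs0 : 0 < sin x := Real.sin_pos_of_pos_of_lt_pi hx.1 (by linarith [Real.pi_pos, hx.2])
    have hs1 : sin x ≤ 1 := Real.sin_le_one x
    have hc1 : cos x ≤ 1 := Real.cos_le_one x
    have hts : sin t = cos x := by rw [ht, Real.sin_pi_div_two_sub]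
    have htc : cos t = sin x := by rw [ht, Real.cos_pi_div_two_sub]
    have e1 : log ((1 + sin x) / cos x) = log (1 + sin x) - log (cos x) :=
      Real.log_div (by linarith) hc.ne'
    -- bound A = 1 - sin x * log (1 + sin x)
    have hl1 : 0 ≤ log (1 + sin x) := Real.log_nonneg (by linarith)
    have hl2 : log (1 + sin x) ≤ 1 := by
      have := Real.log_le_sub_one_of_pos (show (0:ℝ) < 1 + sin x by linarith)
      linarith
    have hA1 : 0 ≤ sin x * log (1 + sin x) := by positivity
    have hA2 : sin x * log (1 + sin x) ≤ 1 := by nlinarith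
    -- Jordan: 2/π * t ≤ sin t
    have hpi : 0 < π := Real.pi_pos
    have hjordan : 2/π * t ≤ sin t := Real.mul_le_sin ht0.le htp.le
    have hjpos : 0 < 2/π * t := by positivity
    have hlogc_lb : log (2/π * t) ≤ log (cos x) := by
      rw [← hts]; exact Real.log_le_log hjpos hjordan
    have hlog_expand : log (2/π * t) = log 2 - log π + log t := by
      rw [Real.log_mul (by positivity) ht0.ne', Real.log_div two_ne_zero hpi.ne']
    have hlogc_le0 : log (cos x) ≤ 0 := Real.log_nonpos hc.le hc1
    -- 1 - sin x ≤ t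
    have hsin_half : sin (t/2) ≤ t/2 := Real.sin_le (by linarith)
    have hsin_half_nn : 0 ≤ sin (t/2) :=
      Real.sin_nonneg_of_nonneg_of_le_pi (by linarith) (by linarith)
    have hct2 : cos t = cos (t/2)^2 - sin (t/2)^2 := by
      rw [← Real.cos_two_mul']; ring_nf
    have hpyth2 := Real.sin_sq_add_cos_sq (t/2)
    have h1ms : 1 - sin x ≤ t := by nlinarith [htc, htp, Real.pi_le_four]
    -- B = (sin x - 1) * log (cos x) ∈ [0, 3]
    have hnb2 : 0 ≤ -log (cos x) := by linarith
    have hB0 : 0 ≤ (sin x - 1) * log (cos x) := by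
      nlinarith [mul_nonneg (show (0:ℝ) ≤ 1 - sin x by linarith) hnb2]
    have hinv : -log t ≤ 1/t := by
      have := Real.log_le_sub_one_of_pos (show (0:ℝ) < 1/t by positivity)
      rw [Real.log_div one_ne_zero ht0.ne', Real.log_one] at this
      linarith
    have hlogpi2 : log (π/2) = log π - log 2 := Real.log_div hpi.ne' two_ne_zero
    have hlogpi2_le : log (π/2) ≤ 1 := by
      have h4 : π ≤ 4 := Real.pi_le_four
      have := Real.log_le_sub_one_of_pos (show (0:ℝ) < π/2 by positivity)
      linarith
    have hB3 : (sin x - 1) * log (cos x) ≤ 3 := by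
      have hb1 : -log (cos x) ≤ log (π/2) - log t := by
        have h := hlogc_lb; rw [hlog_expand] at h; rw [hlogpi2]; linarith
      have hmm : (1 - sin x) * (-log (cos x)) ≤ t * (log (π/2) - log t) :=
        mul_le_mul h1ms hb1 hnb2 ht0.le
      have hub : t * (log (π/2) - log t) ≤ t + 1 := by
        have h5 : t * (log (π/2) - log t) ≤ t * (1 + 1/t) := by
          apply mul_le_mul_of_nonneg_left _ ht0.le
          linarith
        have ht1 : t * (1 + 1/t) = t + 1 := by field_simp
        linarith
      linarith [Real.pi_le_four]
    -- C = log t - log (cos x) ∈ [0, 1]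
    have hsint_le : sin t ≤ t := Real.sin_le ht0.le
    have hC0 : log (cos x) ≤ log t := by
      rw [← hts]; exact Real.log_le_log (by rw [hts]; exact hc) hsint_le
    have hC1 : log t - log (cos x) ≤ 1 := by
      have h := hlogc_lb; rw [hlog_expand] at h
      linarith
    rw [phiEven, e1, abs_le]
    constructor <;> linarith
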